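/- Let ε > 0 be sufficiently small, and define points in R³: a = (−ε,−ε,−ε), b = (1,0,0), c = (0,1,0), d = (0,0,1), e = (2/3+ε, 2/3+ε, 2/3+ε). Then the point e lies strictly inside the circumsphere of the tetrahedron abcd. -/
import Mathlib


open Real EuclideanGeometry

/-- A point of `ℝ³` given by its three coordinates. -/
noncomputable def pt (x y z : ℝ) : EuclideanSpace ℝ (Fin 3) :=
  (WithLp.equiv 2 (Fin 3 → ℝ)).symm ![x, y, z]

lemma dist_pt (x y z x' y' z' : ℝ) :
    dist (pt x y z) (pt x' y' z') = Real.sqrt ((x-x')^2+(y-y')^2+(z-z')^2) := by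
  simp [pt, EuclideanSpace.dist_eq, Fin.sum_univ_three, Real.dist_eq, sq_abs]

/-- For all sufficiently small `ε > 0`, the point `e = (2/3+ε, 2/3+ε, 2/3+ε)` lies
strictly inside the circumsphere of the tetrahedron with vertices
`a = (−ε,−ε,−ε)`, `b = (1,0,0)`, `c = (0,1,0)`, `d = (0,0,1)`. -/
theorem point_inside_circumsphere :
    ∃ ε₀ : ℝ, 0 < ε₀ ∧ ∀ ε : ℝ, 0 < ε → ε < ε₀ →
      ∃ (o : EuclideanSpace ℝ (Fin 3)) (r : ℝ), 0 < r ∧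
        dist o (pt (-ε) (-ε) (-ε)) = r ∧
        dist o (pt 1 0 0) = r ∧
        dist o (pt 0 1 0) = r ∧
        dist o (pt 0 0 1) = r ∧
        dist o (pt (2/3 + ε) (2/3 + ε) (2/3 + ε)) < r := by
  refine ⟨1/10, by norm_num, fun ε hε hε' => ?_⟩
  set t : ℝ := (1 - 3*ε^2) / (6*ε + 2) with ht
  have hD : (0:ℝ) < 6*ε + 2 := by linarith
  have htpos : 0 < t := by
    apply div_pos _ hD; nlinarith
  have heq : (t-1)^2 + t^2 + t^2 = 3*(t+ε)^2 := by
    rw [ht]; field_simp; ring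
  refine ⟨pt t t t, Real.sqrt (3*(t+ε)^2), ?_, ?_, ?_, ?_, ?_, ?_⟩
  · apply Real.sqrt_pos.2; positivity
  · rw [dist_pt]; congr 1; ring
  · rw [dist_pt]; congr 1; rw [← heq]; ring
  · rw [dist_pt]; congr 1; rw [← heq]; ring
  · rw [dist_pt]; congr 1; rw [← heq]; ring
  · rw [dist_pt]
    apply Real.sqrt_lt_sqrt (by positivity)
    have ht3 : 1/3 < t := by
      rw [ht, lt_div_iff₀ hD]; nlinarith
    have key : (t - (2/3+ε))^2 < (t+ε)^2 :=
      sq_lt_sq' (by linarith) (by linarith)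
    nlinarith [key]
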